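/- Every normalisable ECC term lies in some stratum: 𝒯 = ∪_{n∈ω} (Π_n ∪ Σ_n). -/

import Mathlib

namespace ECC

/-- Terms of Luo's Extended Calculus of Constructions, in de Bruijn representation. -/
inductive Term : Type
  | var   : ℕ → Term
  | prop  : Term
  | type  : ℕ → Term
  | pi    : Term → Term → Term
  | sigma : Term → Term → Term
  | lam   : Term → Term → Term
  | app   : Term → Term → Term
  | pair  : Term → Term → Term → Term   -- ⟨M, N⟩_B with type annotation B
  | proj1 : Term → Term
  | proj2 : Term → Term
deriving DecidableEq

/-- Lift (shift by `d`) all de Bruijn indices ≥ `k`. -/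
def lift (d : ℕ) : ℕ → Term → Term
  | k, .var n       => if n < k then .var n else .var (n + d)
  | _, .prop        => .prop
  | _, .type j      => .type j
  | k, .pi A B      => .pi (lift d k A) (lift d (k+1) B)
  | k, .sigma A B   => .sigma (lift d k A) (lift d (k+1) B)
  | k, .lam A M     => .lam (lift d k A) (lift d (k+1) M)
  | k, .app M N     => .app (lift d k M) (lift d k N)
  | k, .pair M N B  => .pair (lift d k M) (lift d k N) (lift d k B)
  | k, .proj1 M     => .proj1 (lift d k M)
  | k, .proj2 M     => .proj2 (lift d k M)

/-- Capture-avoiding substitution `[N/x]A` of the term `N` for the variable `x` in `A`. -/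
def subst (N : Term) : ℕ → Term → Term
  | k, .var n       => if n < k then .var n else if n = k then lift k 0 N else .var (n - 1)
  | _, .prop        => .prop
  | _, .type j      => .type j
  | k, .pi A B      => .pi (subst N k A) (subst N (k+1) B)
  | k, .sigma A B   => .sigma (subst N k A) (subst N (k+1) B)
  | k, .lam A M     => .lam (subst N k A) (subst N (k+1) M)
  | k, .app M M'    => .app (subst N k M) (subst N k M')
  | k, .pair M M' B => .pair (subst N k M) (subst N k M') (subst N k B)
  | k, .proj1 M     => .proj1 (subst N k M)
  | k, .proj2 M     => .proj2 (subst N k M)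

/-- `[N/x₀]B` : substitution for the outermost bound variable. -/
def subst0 (B N : Term) : Term := subst N 0 B

/-- One-step reduction (β together with the projection reductions, closed under all
term-formation congruences). -/
inductive Red : Term → Term → Prop
  | beta    : Red (.app (.lam A M) N) (subst0 M N)
  | pr1     : Red (.proj1 (.pair M N B)) M
  | pr2     : Red (.proj2 (.pair M N B)) N
  | piL     : Red A A' → Red (.pi A B) (.pi A' B)
  | piR     : Red B B' → Red (.pi A B) (.pi A B')
  | sigmaL  : Red A A' → Red (.sigma A B) (.sigma A' B)
  | sigmaR  : Red B B' → Red (.sigma A B) (.sigma A B')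
  | lamL    : Red A A' → Red (.lam A M) (.lam A' M)
  | lamR    : Red M M' → Red (.lam A M) (.lam A M')
  | appL    : Red M M' → Red (.app M N) (.app M' N)
  | appR    : Red N N' → Red (.app M N) (.app M N')
  | pairL   : Red M M' → Red (.pair M N B) (.pair M' N B)
  | pairR   : Red N N' → Red (.pair M N B) (.pair M N' B)
  | pairB   : Red B B' → Red (.pair M N B) (.pair M N B')
  | proj1C  : Red M M' → Red (.proj1 M) (.proj1 M')
  | proj2C  : Red M M' → Red (.proj2 M) (.proj2 M')

/-- Conversion `≃` : the equivalence relation generated by reduction. -/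
def Conv : Term → Term → Prop := Relation.EqvGen Red

/-- `A` has a normal form. -/
def HasNF (A : Term) : Prop :=
  ∃ B, Relation.ReflTransGen Red A B ∧ ∀ C, ¬ Red B C

/-- `𝒯` : the set of normalisable terms. -/
def Tset : Set Term := {A | HasNF A}

/-- Universes are `Prop` and the `Type_j`. -/
def IsUniv (T : Term) : Prop := T = .prop ∨ ∃ j, T = .type j

/-- The cumulativity relation `⪯` : the smallest preorder containing conversion,
the universe order, congruence for Π in the codomain, and congruence for Σ in both
components. -/
inductive Cum : Term → Term → Prop
  | conv     : Conv A B → Cum A B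
  | propType : Cum .prop (.type 0)
  | typeType : j ≤ k → Cum (.type j) (.type k)
  | pi       : Conv A A' → Cum B B' → Cum (.pi A B) (.pi A' B')
  | sigma    : Cum A A' → Cum B B' → Cum (.sigma A B) (.sigma A' B')
  | trans    : Cum A B → Cum B C → Cum A C

/-- The strict cumulativity relation `≺` : `A ⪯ B` and `A ≄ B`. -/
def SCum (A B : Term) : Prop := Cum A B ∧ ¬ Conv A B

/-- The stratified cumulativity relations `⪯ᵢ`. -/
inductive CumL : ℕ → Term → Term → Prop
  | conv     : Conv A B → CumL i A B
  | propType : CumL i .prop (.type j)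
  | typeType : j < k → CumL i (.type j) (.type k)
  | succ     : CumL i A B → CumL (i+1) A B
  | pi       : Conv M (.pi A B) → Conv N (.pi A' B') → Conv A A' → CumL i B B' →
               CumL (i+1) M N
  | sigma    : Conv M (.sigma A B) → Conv N (.sigma A' B') → CumL i A A' → CumL i B B' →
               CumL (i+1) M N

/-- Strict stratified cumulativity `≺ᵢ`. -/
def SCumL (i : ℕ) (A B : Term) : Prop := CumL i A B ∧ ¬ Conv A B

/-- Is the outermost symbol of a term Π or Σ? -/
def BinderHeaded : Term → Prop
  | .pi _ _    => True
  | .sigma _ _ => True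
  | _          => False

/-- The base stratum: normalisable terms not convertible to a binder-headed
normalisable term. -/
def Base : Set Term :=
  {T | HasNF T ∧ ¬ ∃ B, HasNF B ∧ BinderHeaded B ∧ Conv T B}

/-- The stratification `(Π_n, Σ_n)` of `𝒯`. -/
def Strata : ℕ → Set Term × Set Term
  | 0 => (Base, Base)
  | n+1 =>
    ({T | ∃ k l, ∃ _ : k + l = n, ∃ A B, HasNF (Term.pi A B) ∧ Conv T (Term.pi A B) ∧
        A ∈ (Strata k).1 ∪ (Strata k).2 ∧ B ∈ (Strata l).1 ∪ (Strata l).2},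
     {T | ∃ k l, ∃ _ : k + l = n, ∃ A B, HasNF (Term.sigma A B) ∧ Conv T (Term.sigma A B) ∧
        A ∈ (Strata k).1 ∪ (Strata k).2 ∧ B ∈ (Strata l).1 ∪ (Strata l).2})
termination_by n => n
decreasing_by all_goals omega

/-- The stratum `Π_n`. -/
def PiStr (n : ℕ) : Set Term := (Strata n).1

/-- The stratum `Σ_n`. -/
def SigStr (n : ℕ) : Set Term := (Strata n).2

/-- The specification of the rank function `φ : 𝒯 → ω`. -/
def PhiSpec (φ : Term → ℕ) : Prop :=
  (∀ M N, HasNF M → HasNF N → Conv M N → φ M = φ N) ∧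
  (∀ T, HasNF T → Conv T .prop → φ T = 2) ∧
  (∀ T j, HasNF T → Conv T (.type j) → φ T = 3 + j) ∧
  (∀ T, T ∈ PiStr 0 → ¬ Conv T .prop → (∀ j, ¬ Conv T (.type j)) → φ T = 1) ∧
  (∀ T A B, HasNF T → (Conv T (.pi A B) ∨ Conv T (.sigma A B)) → φ T = φ A * φ B) ∧
  (∀ T, HasNF T → 0 < φ T)

mutual
/-- Valid contexts of ECC (de Bruijn: the head of the list is the most recent entry). -/
inductive Valid : List Term → Prop
  | nil  : Valid []
  | cons : Typing Γ A (.type j) → Valid (A :: Γ)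

/-- The typing judgement `Γ ⊢ M : A` of ECC. -/
inductive Typing : List Term → Term → Term → Prop
  | prop  : Valid Γ → Typing Γ .prop (.type 0)
  | type  : Valid Γ → Typing Γ (.type j) (.type (j+1))
  | var   : Valid Γ → Γ[n]? = some A → Typing Γ (.var n) (lift (n+1) 0 A)
  | pi1   : Typing Γ A (.type j) → Typing (A :: Γ) B .prop →
            Typing Γ (.pi A B) .prop
  | pi2   : Typing Γ A (.type j) → Typing (A :: Γ) B (.type j) →
            Typing Γ (.pi A B) (.type j)
  | sig   : Typing Γ A (.type j) → Typing (A :: Γ) B (.type j) →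
            Typing Γ (.sigma A B) (.type j)
  | lam   : Typing (A :: Γ) M B → Typing Γ (.lam A M) (.pi A B)
  | app   : Typing Γ M (.pi A B) → Typing Γ N A → Typing Γ (.app M N) (subst0 B N)
  | pair  : Typing Γ M A → Typing Γ N (subst0 B M) → Typing (A :: Γ) B (.type j) →
            Typing Γ (.pair M N (.sigma A B)) (.sigma A B)
  | proj1 : Typing Γ M (.sigma A B) → Typing Γ (.proj1 M) A
  | proj2 : Typing Γ M (.sigma A B) → Typing Γ (.proj2 M) (subst0 B (.proj1 M))
  | cum   : Typing Γ M A → Typing Γ B (.type j) → Cum A B → Typing Γ M B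
end

/-- `Type_j` for `j ∈ ℤ`, with the convention `Type_{-1} = Prop`. -/
def TType (j : ℤ) : Term := if j < 0 then .prop else .type j.toNat

/-- The typing judgement of the restricted system `ECC⁻`: the rules
`(Π2)(Σ)(app)(pair)(⪯)` of ECC are replaced by `(Π2')(Σ')(app')(pair')` and `(≃)_ρ`. -/
inductive TypingM : List Term → Term → Term → Prop
  | prop  : Valid Γ → TypingM Γ .prop (.type 0)
  | type  : Valid Γ → TypingM Γ (.type j) (.type (j+1))
  | var   : Valid Γ → Γ[n]? = some A → TypingM Γ (.var n) (lift (n+1) 0 A)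
  | pi1   : TypingM Γ A (.type j) → TypingM (A :: Γ) B .prop →
            TypingM Γ (.pi A B) .prop
  | pi2'  : TypingM Γ A (TType j) → TypingM (A :: Γ) B (TType k) → 0 ≤ k →
            TypingM Γ (.pi A B) (TType (max (max j k) 0))
  | sig'  : TypingM Γ A (TType j) → TypingM (A :: Γ) B (TType k) →
            TypingM Γ (.sigma A B) (TType (max (max j k) 0))
  | lam   : TypingM (A :: Γ) M B → TypingM Γ (.lam A M) (.pi A B)
  | app'  : TypingM Γ M (.pi A B) → TypingM Γ N A' → Cum A' A →
            TypingM Γ (.app M N) (subst0 B N)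
  | pair' : TypingM Γ M A → TypingM Γ N C → TypingM (A' :: Γ) B' (.type j) →
            Cum A A' → Cum C (subst0 B' M) →
            TypingM Γ (.pair M N (.sigma A' B')) (.sigma A' B')
  | proj1 : TypingM Γ M (.sigma A B) → TypingM Γ (.proj1 M) A
  | proj2 : TypingM Γ M (.sigma A B) → TypingM Γ (.proj2 M) (subst0 B (.proj1 M))
  | conv  : TypingM Γ M A → Conv A A' → Typing Γ A' (.type j) → TypingM Γ M A'

end ECC

/-!
Everything rests on the Church–Rosser property, proved with Tait–Martin-Löf parallel reduction
and Takahashi's complete development: convertible terms have a common reduct. Hence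
normalisability is invariant under conversion, so every member of a stratum is normalisable;
and a normal form not headed by Π or Σ is not convertible to any term that is, because the
reducts of a binder-headed term are binder-headed. Induction on the normal form of a term then
places it in the base stratum or, when it is `Π x:A.B` or `Σ x:A.B` with `A` and `B` normal,
in the stratum whose index is one more than the sum of theirs.
-/

namespace ECC

open Relation

theorem lift_lift_comm (d e : ℕ) (t : Term) {j k : ℕ} (h : j ≤ k) :
    lift d (k + e) (lift e j t) = lift e j (lift d k t) := by
  induction t generalizing j k with
  | var n =>
    simp only [lift]
    split_ifs <;> simp only [lift] <;> split_ifs <;> first | rfl | omega | (congr 1; omega)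
  | _ => simp only [lift, Nat.add_right_comm _ e 1, *, Nat.add_le_add_iff_right]

theorem lift_lift_add (d e : ℕ) (t : Term) {j k : ℕ} (h₁ : k ≤ j) (h₂ : j ≤ e + k) :
    lift d j (lift e k t) = lift (e + d) k t := by
  induction t generalizing j k with
  | var n =>
    simp only [lift]
    split_ifs <;> simp only [lift] <;> split_ifs <;> first | rfl | omega | (congr 1; omega)
  | _ => simp only [lift] <;> congr 1 <;> apply_assumption <;> omega

theorem subst_lift_cancel (N t : Term) {j k m : ℕ} (h₁ : k ≤ j) (h₂ : j ≤ k + m) :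
    subst N j (lift (m + 1) k t) = lift m k t := by
  induction t generalizing j k with
  | var n =>
    simp only [lift]
    split_ifs <;> simp only [subst] <;> split_ifs <;> first | rfl | omega
  | _ => simp only [lift, subst] <;> congr 1 <;> apply_assumption <;> omega

theorem subst_lift_comm (N t : Term) (j k c : ℕ) :
    subst N (k + j + c) (lift j c t) = lift j c (subst N (k + c) t) := by
  induction t generalizing c with
  | var n =>
    simp only [lift, subst]
    split_ifs <;> simp only [subst, lift] <;> split_ifs <;>
      (first
        | rfl | omega | (congr 1; omega)
        | (rw [lift_lift_add] <;> first | omega | (congr 1; omega)))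
  | pi _ _ ihA ihB | sigma _ _ ihA ihB | lam _ _ ihA ihB =>
    exact congrArg₂ _ (ihA c) (ihB (c + 1))
  | _ => simp only [lift, subst, *]

theorem lift_subst (N t : Term) (d j k : ℕ) :
    lift d (k + j) (subst N j t) = subst (lift d k N) j (lift d (k + j + 1) t) := by
  induction t generalizing j with
  | var n =>
    simp only [lift, subst]
    split_ifs <;> simp only [subst, lift] <;> split_ifs <;>
      first | rfl | omega | (congr 1; omega) | exact lift_lift_comm d j N (Nat.zero_le k)
  | pi _ _ ihA ihB | sigma _ _ ihA ihB | lam _ _ ihA ihB =>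
    exact congrArg₂ _ (ihA j) (ihB (j + 1))
  | _ => simp only [lift, subst, *]

theorem subst_subst (N P t : Term) (j k : ℕ) :
    subst N (k + j) (subst P j t) = subst (subst N k P) j (subst N (k + j + 1) t) := by
  induction t generalizing j with
  | var n =>
    simp only [subst]
    split_ifs <;> (try simp only [subst]) <;> (try split_ifs) <;>
      (first
        | rfl | omega
        | simpa using subst_lift_comm N P j k 0
        | (rw [subst_lift_cancel] <;> omega))
  | pi _ _ ihA ihB | sigma _ _ ihA ihB | lam _ _ ihA ihB =>
    exact congrArg₂ _ (ihA j) (ihB (j + 1))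
  | _ => simp only [subst, *]

theorem lift_subst0 (M N : Term) (d k : ℕ) :
    lift d k (subst0 M N) = subst0 (lift d (k + 1) M) (lift d k N) :=
  lift_subst N M d 0 k

theorem subst_subst0 (P M N : Term) (k : ℕ) :
    subst P k (subst0 M N) = subst0 (subst P (k + 1) M) (subst P k N) :=
  subst_subst P N M 0 k

inductive ParRed : Term → Term → Prop
  | var   : ParRed (.var n) (.var n)
  | prop  : ParRed .prop .prop
  | type  : ParRed (.type j) (.type j)
  | pi    : ParRed A A' → ParRed B B' → ParRed (.pi A B) (.pi A' B')
  | sigma : ParRed A A' → ParRed B B' → ParRed (.sigma A B) (.sigma A' B')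
  | lam   : ParRed A A' → ParRed M M' → ParRed (.lam A M) (.lam A' M')
  | app   : ParRed M M' → ParRed N N' → ParRed (.app M N) (.app M' N')
  | pair  : ParRed M M' → ParRed N N' → ParRed B B' → ParRed (.pair M N B) (.pair M' N' B')
  | proj1 : ParRed M M' → ParRed (.proj1 M) (.proj1 M')
  | proj2 : ParRed M M' → ParRed (.proj2 M) (.proj2 M')
  | beta  : ParRed M M' → ParRed N N' → ParRed (.app (.lam A M) N) (subst0 M' N')
  | pr1   : ParRed M M' → ParRed (.proj1 (.pair M N B)) M'
  | pr2   : ParRed N N' → ParRed (.proj2 (.pair M N B)) N'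

namespace ParRed

theorem refl (t : Term) : ParRed t t := by
  induction t <;> constructor <;> assumption

theorem of_red (h : Red M N) : ParRed M N := by
  induction h <;> constructor <;> first | assumption | exact refl _

theorem reflTransGen_red (h : ParRed M N) : ReflTransGen Red M N := by
  induction h with
  | var | prop | type => exact .refl
  | pi _ _ ihA ihB =>
    exact (ihA.lift (Term.pi · _) fun _ _ => .piL).trans
      (ihB.lift (Term.pi _ ·) fun _ _ => .piR)
  | sigma _ _ ihA ihB =>
    exact (ihA.lift (Term.sigma · _) fun _ _ => .sigmaL).trans
      (ihB.lift (Term.sigma _ ·) fun _ _ => .sigmaR)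
  | lam _ _ ihA ihM =>
    exact (ihA.lift (Term.lam · _) fun _ _ => .lamL).trans
      (ihM.lift (Term.lam _ ·) fun _ _ => .lamR)
  | app _ _ ihM ihN =>
    exact (ihM.lift (Term.app · _) fun _ _ => .appL).trans
      (ihN.lift (Term.app _ ·) fun _ _ => .appR)
  | pair _ _ _ ihM ihN ihB =>
    exact ((ihM.lift (Term.pair · _ _) fun _ _ => .pairL).trans
      (ihN.lift (Term.pair _ · _) fun _ _ => .pairR)).trans
      (ihB.lift (Term.pair _ _ ·) fun _ _ => .pairB)
  | proj1 _ ih => exact ih.lift Term.proj1 fun _ _ => .proj1C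
  | proj2 _ ih => exact ih.lift Term.proj2 fun _ _ => .proj2C
  | beta _ _ ihM ihN =>
    exact ((ihM.lift (fun x => Term.app (Term.lam _ x) _) fun _ _ h => .appL (.lamR h)).trans
      (ihN.lift (Term.app _ ·) fun _ _ => .appR)).tail .beta
  | pr1 _ ih | pr2 _ ih => exact .head (by constructor) ih

theorem lift (h : ParRed M N) (d k : ℕ) : ParRed (lift d k M) (lift d k N) := by
  induction h generalizing k with
  | var => simp only [ECC.lift]; split_ifs <;> exact .var
  | beta _ _ ihM ihN => rw [lift_subst0]; exact .beta (ihM _) (ihN _)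
  | _ => constructor <;> apply_assumption

theorem subst (hP : ParRed P P') (h : ParRed M N) (k : ℕ) :
    ParRed (subst P k M) (subst P' k N) := by
  induction h generalizing k with
  | var => simp only [ECC.subst]; split_ifs <;> first | exact .var | exact hP.lift k 0
  | beta _ _ ihM ihN => rw [subst_subst0]; exact .beta (ihM _) (ihN _)
  | _ => constructor <;> apply_assumption

theorem subst0 (hM : ParRed M M') (hN : ParRed N N') : ParRed (subst0 M N) (subst0 M' N') :=
  hN.subst hM 0

end ParRed

def dev : Term → Term
  | .var n => .var n
  | .prop => .prop
  | .type j => .type j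
  | .pi A B => .pi (dev A) (dev B)
  | .sigma A B => .sigma (dev A) (dev B)
  | .lam A M => .lam (dev A) (dev M)
  | .app (.lam _ M) N => subst0 (dev M) (dev N)
  | .app M N => .app (dev M) (dev N)
  | .pair M N B => .pair (dev M) (dev N) (dev B)
  | .proj1 (.pair M _ _) => dev M
  | .proj1 M => .proj1 (dev M)
  | .proj2 (.pair _ N _) => dev N
  | .proj2 M => .proj2 (dev M)

theorem ParRed.to_dev (h : ParRed M N) : ParRed N (dev M) := by
  induction h with
  | @app M _ _ _ hM _ ihM ihN =>
    cases M <;> try (simp only [dev]; exact .app ihM ihN)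
    cases hM with | lam => cases ihM with | lam _ ihP => exact .beta ihP ihN
  | @proj1 M _ hM ihM =>
    cases M <;> try (simp only [dev]; exact .proj1 ihM)
    cases hM with | pair => cases ihM with | pair ihP => exact .pr1 ihP
  | @proj2 M _ hM ihM =>
    cases M <;> try (simp only [dev]; exact .proj2 ihM)
    cases hM with | pair => cases ihM with | pair _ ihQ => exact .pr2 ihQ
  | beta _ _ ihM ihN => exact .subst0 ihM ihN
  | pr1 _ ih | pr2 _ ih => exact ih
  | _ => constructor <;> assumption

theorem Conv.exists_common_reduct (h : Conv A B) :
    ∃ C, ReflTransGen Red A C ∧ ReflTransGen Red B C := by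
  have hjoin : Equivalence (Join (ReflTransGen ParRed)) :=
    equivalence_join_reflTransGen fun M _ _ h₁ h₂ =>
      ⟨dev M, .single h₁.to_dev, .single h₂.to_dev⟩
  obtain ⟨C, hAC, hBC⟩ := hjoin.eqvGen_iff.1 <|
    EqvGen.mono (fun _ N h => ⟨N, .single (ParRed.of_red h), .refl⟩) _ _ h
  have hpar : ReflTransGen ParRed ≤ ReflTransGen Red :=
    reflTransGen_closed fun _ _ => ParRed.reflTransGen_red
  exact ⟨C, hpar _ _ hAC, hpar _ _ hBC⟩

def IsNormal (t : Term) : Prop := ∀ u, ¬ Red t u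

theorem IsNormal.eq_of_reflTransGen (hN : IsNormal N) (h : ReflTransGen Red N M) : M = N :=
  (ReflTransGen.cases_head_iff.1 h).elim Eq.symm fun ⟨_, hred, _⟩ => (hN _ hred).elim

theorem Conv.of_reflTransGen (h : ReflTransGen Red A B) : Conv A B :=
  EqvGen.reflTransGen_le_eqvGen Red _ _ h

theorem HasNF.of_conv (hB : HasNF B) (h : Conv T B) : HasNF T := by
  obtain ⟨N, hBN, hN⟩ := hB
  obtain ⟨C, hTC, hNC⟩ :=
    Conv.exists_common_reduct (h.trans _ _ _ (Conv.of_reflTransGen hBN))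
  exact ⟨N, IsNormal.eq_of_reflTransGen hN hNC ▸ hTC, hN⟩

theorem BinderHeaded.of_reflTransGen (hM : BinderHeaded M) (h : ReflTransGen Red M N) :
    BinderHeaded N := by
  induction h with
  | refl => exact hM
  | tail _ hred ih => cases hred <;> simp_all only [BinderHeaded]

theorem mem_base_of_reflTransGen (hN : IsNormal N) (hb : ¬ BinderHeaded N)
    (hT : ReflTransGen Red T N) : T ∈ Base := by
  refine ⟨⟨N, hT, hN⟩, ?_⟩
  rintro ⟨B, -, hB, hTB⟩
  obtain ⟨C, hNC, hBC⟩ :=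
    Conv.exists_common_reduct ((Conv.of_reflTransGen hT).symm _ _ |>.trans _ _ _ hTB)
  exact hb (hN.eq_of_reflTransGen hNC ▸ hB.of_reflTransGen hBC)

theorem piStr_zero : PiStr 0 = Base := by rw [PiStr, Strata]

theorem sigStr_zero : SigStr 0 = Base := by rw [SigStr, Strata]

theorem piStr_succ (n : ℕ) : PiStr (n + 1) =
    {T | ∃ k l, ∃ _ : k + l = n, ∃ A B, HasNF (Term.pi A B) ∧ Conv T (Term.pi A B) ∧
        A ∈ PiStr k ∪ SigStr k ∧ B ∈ PiStr l ∪ SigStr l} := by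
  rw [PiStr, Strata]; rfl

theorem sigStr_succ (n : ℕ) : SigStr (n + 1) =
    {T | ∃ k l, ∃ _ : k + l = n, ∃ A B, HasNF (Term.sigma A B) ∧ Conv T (Term.sigma A B) ∧
        A ∈ PiStr k ∪ SigStr k ∧ B ∈ PiStr l ∪ SigStr l} := by
  rw [SigStr, Strata]; rfl

theorem exists_mem_strata_of_reflTransGen (hN : IsNormal N) (hT : ReflTransGen Red T N) :
    ∃ n, T ∈ PiStr n ∪ SigStr n := by
  induction N generalizing T with
  | pi A B ihA ihB =>
    obtain ⟨k, hk⟩ := ihA (fun _ h => hN _ (.piL h)) .refl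
    obtain ⟨l, hl⟩ := ihB (fun _ h => hN _ (.piR h)) .refl
    refine ⟨k + l + 1, .inl ?_⟩
    rw [piStr_succ]
    exact ⟨k, l, rfl, A, B, ⟨_, .refl, hN⟩, Conv.of_reflTransGen hT, hk, hl⟩
  | sigma A B ihA ihB =>
    obtain ⟨k, hk⟩ := ihA (fun _ h => hN _ (.sigmaL h)) .refl
    obtain ⟨l, hl⟩ := ihB (fun _ h => hN _ (.sigmaR h)) .refl
    refine ⟨k + l + 1, .inr ?_⟩
    rw [sigStr_succ]
    exact ⟨k, l, rfl, A, B, ⟨_, .refl, hN⟩, Conv.of_reflTransGen hT, hk, hl⟩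
  | _ => exact ⟨0, .inl (piStr_zero ▸ mem_base_of_reflTransGen hN id hT)⟩

theorem HasNF.of_mem_strata (h : T ∈ PiStr n ∪ SigStr n) : HasNF T := by
  cases n with
  | zero =>
    rw [piStr_zero, sigStr_zero, Set.union_self] at h
    exact h.1
  | succ n =>
    rw [piStr_succ, sigStr_succ] at h
    rcases h with ⟨_, _, _, _, _, hNF, hconv, _⟩ | ⟨_, _, _, _, _, hNF, hconv, _⟩ <;>
      exact HasNF.of_conv hNF hconv

end ECC

/-- every normalisable ECC term lies in some stratum:
`𝒯 = ⋃_{n∈ω} (Π_n ∪ Σ_n)`. -/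
theorem Tset_eq_union_strata :
    ECC.Tset = ⋃ n : ℕ, (ECC.PiStr n ∪ ECC.SigStr n) := by
  ext T
  simp only [Set.mem_iUnion]
  exact ⟨fun ⟨_, hTN, hN⟩ => ECC.exists_mem_strata_of_reflTransGen hN hTN,
    fun ⟨_, h⟩ => ECC.HasNF.of_mem_strata h⟩
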